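/- arXiv:1709.09589 — 5 statements merged into one kernel-verified Lean document; each statement's English description precedes it below -/
import Mathlib

section
/- Let n, r be positive integers, let A ⊆ {1,...,n}, let x ∈ A, and suppose there exist m pairwise disjoint pairs {u₁,v₁},...,{u_m,v_m} of distinct elements of A \ {x} such that for each i, {uᵢ, vᵢ, x} is a Schur triple (i.e. some permutation satisfies a + b = c) with uᵢ, vᵢ, x distinct. Then the number of colourings σ : A → {1,...,r} with no monochromatic Schur triple is at most (r² − 1)^m · r^(|A| − 2m). -/
/-!
A colouring without monochromatic Schur triples cannot give both ends of a link pair `{uᵢ, vᵢ}`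
the colour of `x`. Hence it is determined by its restriction to the `|A| - 2m` elements outside
the matching, `r` choices each, together with the colours of the `m` pairs, each of which avoids
one of the `r²` pairs of colours.
-/

open Finset Fintype

theorem card_colourings_avoiding_matching_le {α κ : Type*} [Fintype α] [DecidableEq α]
    [Fintype κ] [DecidableEq κ] {m : ℕ} (x : α) (e : Fin m × Bool ↪ α)
    (hx : x ∉ Set.range e) :
    #{σ : α → κ | ∀ i, (σ (e (i, true)), σ (e (i, false))) ≠ (σ x, σ x)}
      ≤ (card κ ^ 2 - 1) ^ m * card κ ^ (card α - 2 * m) := by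
  classical
  let B := {a // a ∉ Set.range e}
  have hB : card B = card α - 2 * m := by
    rw [card_subtype_compl, Set.card_range_of_injective e.injective]
    simp [mul_comm]
  let xB : B := ⟨x, hx⟩
  let T := univ.sigma fun f : B → κ => piFinset fun _ : Fin m => {(f xB, f xB)}ᶜ
  calc _ ≤ #T := card_le_card_of_injOn
        (fun σ => ⟨fun b => σ b, fun i => (σ (e (i, true)), σ (e (i, false)))⟩) ?maps ?inj
    _ = _ := by simp [T, Finset.card_sigma, card_piFinset, card_compl, hB, sq, mul_comm]
  case maps =>
    intro σ hσ
    simpa [T] using hσ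
  case inj =>
    intro σ _ τ _ hστ
    simp only [Sigma.mk.inj_iff, heq_eq_eq, funext_iff, Prod.mk.injEq] at hστ
    obtain ⟨hoff, hpairs⟩ := hστ
    funext a
    by_cases ha : a ∈ Set.range e
    · obtain ⟨⟨i, b⟩, rfl⟩ := ha
      cases b
      exacts [(hpairs i).2, (hpairs i).1]
    · exact hoff ⟨a, ha⟩

lemma ne_diag_of_schur_free {M ι κ : Type*} [Add M] {f : ι → M} {σ : ι → κ}
    (hσ : ∀ a b c, σ a = σ b → σ b = σ c → f a + f b ≠ f c) {u v x : ι}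
    (hschur : f u + f v = f x ∨ f u + f x = f v ∨ f v + f x = f u) :
    (σ u, σ v) ≠ (σ x, σ x) := by
  simp only [ne_eq, Prod.mk.injEq, not_and]
  intro hu hv
  rcases hschur with h | h | h
  exacts [hσ u v x (hu.trans hv.symm) hv h, hσ u x v hu hv.symm h, hσ v x u hv hu.symm h]

theorem matching_bounds_colourings_general (r : ℕ)
    (A : Finset ℕ) (x : ℕ) (hx : x ∈ A)
    (m : ℕ) (u v : Fin m → ℕ)
    (huv : ∀ i, u i ∈ A.erase x ∧ v i ∈ A.erase x)
    (hdisj : Function.Injective (fun p : Fin m × Bool => if p.2 then u p.1 else v p.1))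
    (hschur : ∀ i, u i + v i = x ∨ u i + x = v i ∨ v i + x = u i) :
    (Finset.univ.filter (fun σ : A → Fin r =>
      ∀ a b c : A, σ a = σ b → σ b = σ c → (a : ℕ) + (b : ℕ) ≠ (c : ℕ))).card
      ≤ (r ^ 2 - 1) ^ m * r ^ (A.card - 2 * m) := by
  let e : Fin m × Bool ↪ A :=
    ⟨fun p => if p.2 then ⟨u p.1, mem_of_mem_erase (huv p.1).1⟩
      else ⟨v p.1, mem_of_mem_erase (huv p.1).2⟩,
     fun p q h => hdisj (by simpa [apply_ite Subtype.val] using congrArg Subtype.val h)⟩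
  have hxe : ⟨x, hx⟩ ∉ Set.range e := by
    rintro ⟨⟨i, _ | _⟩, h⟩
    exacts [ne_of_mem_erase (huv i).2 (congrArg Subtype.val h),
      ne_of_mem_erase (huv i).1 (congrArg Subtype.val h)]
  calc _ ≤ #{σ : A → Fin r |
          ∀ i, (σ (e (i, true)), σ (e (i, false))) ≠ (σ ⟨x, hx⟩, σ ⟨x, hx⟩)} :=
        card_le_card <| monotone_filter_right _ fun σ _ hσ i =>
          ne_diag_of_schur_free hσ (hschur i)
    _ ≤ _ := by simpa using card_colourings_avoiding_matching_le (κ := Fin r) _ e hxe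

/-- If the link graph of `x` in `A \ {x}` contains a matching of size `m`
(given by pairs `{u i, v i}` of distinct elements of `A \ {x}` forming Schur
triples with `x`), then the number of `r`-colourings of `A` with no
monochromatic Schur triple is at most `(r² − 1)^m · r^(|A| − 2m)`. -/
theorem matching_bounds_colourings (n r : ℕ) (hn : 1 ≤ n) (hr : 1 ≤ r)
    (A : Finset ℕ) (hA : A ⊆ Finset.Icc 1 n) (x : ℕ) (hx : x ∈ A)
    (m : ℕ) (u v : Fin m → ℕ)
    (huv : ∀ i, u i ∈ A.erase x ∧ v i ∈ A.erase x)
    (hdisj : Function.Injective (fun p : Fin m × Bool => if p.2 then u p.1 else v p.1))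
    (hschur : ∀ i, u i + v i = x ∨ u i + x = v i ∨ v i + x = u i) :
    (Finset.univ.filter (fun σ : A → Fin r =>
      ∀ a b c : A, σ a = σ b → σ b = σ c → (a : ℕ) + (b : ℕ) ≠ (c : ℕ))).card
      ≤ (r ^ 2 - 1) ^ m * r ^ (A.card - 2 * m) :=
  matching_bounds_colourings_general r A x hx m u v huv hdisj hschur
end

section
/- Let n ≥ 4 and r ≥ 4. Set A_i = I₂ = {⌊n/2⌋+1,...,n} for 1 ≤ i ≤ ⌊r/2⌋ and A_i = Odd for ⌊r/2⌋ < i ≤ r. Then g(A₁,...,A_r) ≥ (⌊n/4⌋/n) · log₂(r · ⌊r²/4⌋), where g is defined as g(A₁,...,A_r) = (1/n) Σ_{∅ ≠ I ⊆ [r]} |E_I| log₂|I| with E_I = (∩_{i∈I} A_i) \ (∪_{j∉I} A_j). -/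
/-!
Let `L` be the first `⌊r/2⌋` indices. Odd `z > n/2` lie in every `A_i`, even `z > n/2` exactly in
the `A_i` with `i ∈ L`, and odd `z ≤ n/2` exactly in those with `i ∉ L`; each of these three kinds
has at least `⌊n/4⌋` members. Keeping only the regions `E_[r]`, `E_L`, `E_{Lᶜ}` in the
(nonnegative) sum gives `g ≥ (⌊n/4⌋/n) (log r + log ⌊r/2⌋ + log ⌈r/2⌉)`, and
`⌊r/2⌋ ⌈r/2⌉ = ⌊r²/4⌋`.
-/

open Finset

section VennRegion

variable {ι α : Type*} [Fintype ι] [DecidableEq ι] [DecidableEq α]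

/-- The region `E_I = (⋂_{i ∈ I} A_i) \ (⋃_{j ∉ I} A_j)` of the Venn diagram of `A`, inside `U`. -/
def vennRegion (U : Finset α) (A : ι → Finset α) (I : Finset ι) : Finset α :=
  U.filter fun z => ∀ i, z ∈ A i ↔ i ∈ I

theorem mem_vennRegion {U : Finset α} {A : ι → Finset α} {I : Finset ι} {z : α} :
    z ∈ vennRegion U A I ↔ z ∈ U ∧ ∀ i, z ∈ A i ↔ i ∈ I :=
  mem_filter

end VennRegion

theorem Real.logb_natCast_nonneg (b k : ℕ) : 0 ≤ Real.logb b k :=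
  div_nonneg (Real.log_natCast_nonneg k) (Real.log_natCast_nonneg b)

theorem mul_sum_logb_card_le_sum_logb_card {ι : Type*} [Fintype ι] [DecidableEq ι]
    (w : Finset ι → ℕ) {T : Finset (Finset ι)} (hT : ∀ I ∈ T, I ≠ ∅) {m : ℕ}
    (hm : ∀ I ∈ T, m ≤ w I) :
    (m : ℝ) * ∑ I ∈ T, Real.logb 2 #I ≤
      ∑ I ∈ univ.filter (fun I : Finset ι => I ≠ ∅), (w I : ℝ) * Real.logb 2 #I := by
  have hlog (I : Finset ι) : 0 ≤ Real.logb 2 #I := mod_cast Real.logb_natCast_nonneg 2 #I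
  rw [mul_sum]
  calc ∑ I ∈ T, (m : ℝ) * Real.logb 2 #I
      ≤ ∑ I ∈ T, (w I : ℝ) * Real.logb 2 #I :=
        sum_le_sum fun I hI => mul_le_mul_of_nonneg_right (mod_cast hm I hI) (hlog I)
    _ ≤ _ := sum_le_sum_of_subset_of_nonneg
        (fun I hI => mem_filter.2 ⟨mem_univ I, hT I hI⟩)
        (fun I _ _ => mul_nonneg (Nat.cast_nonneg _) (hlog I))

theorem le_card_Ioc_filter_mod_two (a k v : ℕ) (hv : v < 2) :
    k ≤ #((Ioc a (a + 2 * k)).filter fun z => z % 2 = v) := by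
  have h := card_le_card_of_injOn (fun j => a + 1 + 2 * j + (a + 1 + v) % 2) (s := range k)
    (t := (Ioc a (a + 2 * k)).filter fun z => z % 2 = v)
    (fun j hj => by simp only [coe_range, Set.mem_Iio] at hj; simp only [coe_filter, mem_Ioc,
      Set.mem_ofPred_eq]; omega)
    (fun i _ j _ hij => by simp only at hij; omega)
  simpa using h

theorem Nat.sq_div_four (r : ℕ) : r ^ 2 / 4 = r / 2 * (r - r / 2) := by
  obtain ⟨q, rfl | rfl⟩ := Nat.even_or_odd' r
  · rw [show (2 * q) ^ 2 = 4 * (q * q) by ring, show 2 * q / 2 = q by omega,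
      show 2 * q - q = q by omega, Nat.mul_div_cancel_left _ (by norm_num)]
  · rw [show (2 * q + 1) ^ 2 = 1 + 4 * (q * (q + 1)) by ring, show (2 * q + 1) / 2 = q by omega,
      show 2 * q + 1 - q = q + 1 by omega, Nat.add_mul_div_left _ _ (by norm_num)]
    simp

def lowIndices (r : ℕ) : Finset (Fin r) := univ.filter fun i => (i : ℕ) < r / 2

theorem card_lowIndices (r : ℕ) : #(lowIndices r) = r / 2 := by
  rw [lowIndices, Fin.card_filter_val_lt]
  omega

theorem card_compl_lowIndices (r : ℕ) : #(lowIndices r)ᶜ = r - r / 2 := by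
  rw [card_compl, card_lowIndices, Fintype.card_fin]

def halfOddFamily (n r : ℕ) (i : Fin r) : Finset ℕ :=
  if (i : ℕ) < r / 2 then Icc (n / 2 + 1) n else (Icc 1 n).filter Odd

theorem div_four_le_card_vennRegion (n r : ℕ) {I : Finset (Fin r)}
    (hI : I ∈ ({univ, lowIndices r, (lowIndices r)ᶜ} : Finset (Finset (Fin r)))) :
    n / 4 ≤ #(vennRegion (Icc 1 n) (halfOddFamily n r) I) := by
  simp only [mem_insert, mem_singleton] at hI
  rcases hI with rfl | rfl | rfl <;> [
    refine (le_card_Ioc_filter_mod_two (n / 2) (n / 4) 1 one_lt_two).trans (card_le_card ?_);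
    refine (le_card_Ioc_filter_mod_two (n / 2) (n / 4) 0 two_pos).trans (card_le_card ?_);
    refine (le_card_Ioc_filter_mod_two 0 (n / 4) 1 one_lt_two).trans (card_le_card ?_)] <;>
  · intro z hz
    simp only [mem_filter, mem_Ioc] at hz
    simp only [mem_vennRegion, halfOddFamily, lowIndices, mem_compl, mem_filter, mem_univ,
      iff_true, true_and, mem_Icc]
    refine ⟨by omega, fun i => ?_⟩
    split_ifs <;> simp only [mem_Icc, mem_filter, Nat.odd_iff] <;> omega

theorem nonempty_of_mem_univ_lowIndices {r : ℕ} (hr : 2 ≤ r) {I : Finset (Fin r)}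
    (hI : I ∈ ({univ, lowIndices r, (lowIndices r)ᶜ} : Finset (Finset (Fin r)))) : I.Nonempty := by
  simp only [mem_insert, mem_singleton] at hI
  rw [← card_pos]
  rcases hI with rfl | rfl | rfl
  · rw [card_univ, Fintype.card_fin]; omega
  · rw [card_lowIndices]; omega
  · rw [card_compl_lowIndices]; omega

theorem sum_logb_card_univ_lowIndices {r : ℕ} (hr : 2 ≤ r) :
    ∑ I ∈ ({univ, lowIndices r, (lowIndices r)ᶜ} : Finset (Finset (Fin r))), Real.logb 2 #I =
      Real.logb 2 (r * (r ^ 2 / 4 : ℕ)) := by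
  have : Nontrivial (Fin r) := Fin.nontrivial_iff_two_le.2 hr
  have huniv_ne {s : Finset (Fin r)} (hs : #s < r) : univ ≠ s := by
    rintro rfl; rw [card_univ, Fintype.card_fin] at hs; omega
  have h2 : ((r / 2 : ℕ) : ℝ) ≠ 0 := Nat.cast_ne_zero.2 (by omega)
  have h3 : ((r - r / 2 : ℕ) : ℝ) ≠ 0 := Nat.cast_ne_zero.2 (by omega)
  rw [sum_insert, sum_insert, sum_singleton, card_univ, Fintype.card_fin, card_lowIndices,
    card_compl_lowIndices, Nat.sq_div_four, Nat.cast_mul,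
    Real.logb_mul (Nat.cast_ne_zero.2 (by omega)) (mul_ne_zero h2 h3), Real.logb_mul h2 h3]
  · exact mem_singleton.not.2 (ne_compl_self (a := lowIndices r))
  · rw [mem_insert, mem_singleton, not_or]
    exact ⟨huniv_ne (by rw [card_lowIndices]; omega),
      huniv_ne (by rw [card_compl_lowIndices]; omega)⟩

theorem g_of_mixed_family_general (n r : ℕ) (hr : 4 ≤ r) :
    ((((n / 4 : ℕ)) : ℝ) / n) * Real.logb 2 (r * (r ^ 2 / 4 : ℕ)) ≤
    (1 / (n : ℝ)) *
      ∑ I ∈ Finset.univ.filter (fun I : Finset (Fin r) => I ≠ ∅),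
        (((Finset.Icc 1 n).filter (fun z =>
            ∀ i : Fin r,
              (z ∈ (if (i : ℕ) < r / 2 then Finset.Icc (n / 2 + 1) n
                    else (Finset.Icc 1 n).filter (fun k => Odd k)) ↔ i ∈ I))).card : ℝ)
          * Real.logb 2 (I.card) := by
  have hbound := mul_sum_logb_card_le_sum_logb_card
    (fun I => #(vennRegion (Icc 1 n) (halfOddFamily n r) I))
    (fun I hI => (nonempty_of_mem_univ_lowIndices (by omega) hI).ne_empty)
    (fun I hI => div_four_le_card_vennRegion n r hI)
  rw [sum_logb_card_univ_lowIndices (by omega)] at hbound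
  rw [div_mul_eq_mul_div, one_div_mul_eq_div]
  refine div_le_div_of_nonneg_right (hbound.trans_eq (sum_congr rfl fun I _ => ?_)) n.cast_nonneg
  unfold vennRegion halfOddFamily
  -- only the instances deciding `∀ i : Fin r` differ
  congr

/-- Taking `A_i = I₂ = {⌊n/2⌋+1,...,n}` for `i ≤ ⌊r/2⌋` and `A_i = Odd`
otherwise, we have `g(A₁,...,A_r) ≥ (⌊n/4⌋/n) · log₂(r⌊r²/4⌋)`, where
`g(A₁,...,A_r) = (1/n) Σ_{∅≠I⊆[r]} |E_I| log₂ |I|`. -/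
theorem g_of_mixed_family (n r : ℕ) (hn : 4 ≤ n) (hr : 4 ≤ r) :
    ((((n / 4 : ℕ)) : ℝ) / n) * Real.logb 2 (r * (r ^ 2 / 4 : ℕ)) ≤
    (1 / (n : ℝ)) *
      ∑ I ∈ Finset.univ.filter (fun I : Finset (Fin r) => I ≠ ∅),
        (((Finset.Icc 1 n).filter (fun z =>
            ∀ i : Fin r,
              (z ∈ (if (i : ℕ) < r / 2 then Finset.Icc (n / 2 + 1) n
                    else (Finset.Icc 1 n).filter (fun k => Odd k)) ↔ i ∈ I))).card : ℝ)
          * Real.logb 2 (I.card) :=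
  g_of_mixed_family_general n r hr
end

section
/- Let r ≥ 4 and let A₁,...,A_r ⊆ {1,...,n} be sum-free sets. Let D_{r} ∪ D_{r−1} be the set of elements of {1,...,n} lying in at least r − 1 of the sets A₁,...,A_r. Then D_r ∪ D_{r−1} is sum-free; consequently |D_{r−1}| + |D_r| ≤ ⌈n/2⌉. -/
/-!
An element lying in at least `r - 1` of the sets misses at most one of them, so any three such
elements `x`, `y`, `x + y` miss at most three of the `r ≥ 4` sets and hence lie together in one
sum-free `Aᵢ`, which is impossible. For the size bound, if `m` is the largest element of a sum-free
`D ⊆ [1, n]`, then `D` and `m - D` are disjoint subsets of `[0, m]`, so `2 |D| ≤ m + 1 ≤ n + 1`.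
-/

open Finset

def IsSumFree {α : Type*} [Add α] (s : Finset α) : Prop :=
  ∀ x ∈ s, ∀ y ∈ s, x + y ∉ s

theorem Finset.inter_inter_nonempty_of_two_mul_card_lt {ι : Type*} [Fintype ι] [DecidableEq ι]
    {s t u : Finset ι} (h : 2 * Fintype.card ι < #s + #t + #u) : (s ∩ t ∩ u).Nonempty := by
  have hst : #s + #t ≤ #(s ∩ t) + Fintype.card ι := by
    rw [← card_union_add_card_inter, add_comm]
    exact Nat.add_le_add_left (card_le_univ _) _
  refine inter_nonempty_of_card_lt_card_add_card (subset_univ _) (subset_univ _) ?_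
  rw [card_univ]
  omega

theorem IsSumFree.filter_le_card_mem {ι α : Type*} [Fintype ι] [Add α] [DecidableEq α]
    {A : ι → Finset α} (hA : ∀ i, IsSumFree (A i)) {k : ℕ} (hk : 2 * Fintype.card ι < 3 * k)
    (s : Finset α) : IsSumFree (s.filter fun z => k ≤ #{i | z ∈ A i}) := by
  classical
  intro x hx y hy hxy
  rw [mem_filter] at hx hy hxy
  obtain ⟨i, hi⟩ := inter_inter_nonempty_of_two_mul_card_lt (s := {i | x ∈ A i})
    (t := {i | y ∈ A i}) (u := {i | x + y ∈ A i}) (by omega)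
  simp only [mem_inter, mem_filter, mem_univ, true_and] at hi
  exact hA i x hi.1.1 y hi.1.2 hi.2

theorem IsSumFree.card_le_of_subset_Icc {n : ℕ} {s : Finset ℕ} (hs : IsSumFree s)
    (hsub : s ⊆ Icc 1 n) : #s ≤ (n + 1) / 2 := by
  obtain rfl | hne := s.eq_empty_or_nonempty
  · simp
  set m := s.max' hne
  have hle : ∀ x ∈ s, x ≤ m := fun x hx => le_max' s x hx
  have hinj : Set.InjOn (m - ·) s := fun x hx y hy h => by
    have := hle x hx; have := hle y hy; simp only at h; omega
  have hdisj : Disjoint s (s.image (m - ·)) := by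
    refine disjoint_right.2 ?_
    rintro _ hx' hx
    obtain ⟨y, hy, rfl⟩ := mem_image.1 hx'
    have hsum : m - y + y = m := Nat.sub_add_cancel (hle y hy)
    exact hs _ hx y hy (by rw [hsum]; exact max'_mem s hne)
  have hunion : s ∪ s.image (m - ·) ⊆ range (m + 1) := by
    intro x hx
    rcases mem_union.1 hx with hx | hx
    · exact mem_range.2 (Nat.lt_succ_of_le (hle x hx))
    · obtain ⟨y, -, rfl⟩ := mem_image.1 hx
      exact mem_range.2 (by omega)
  have hm : m ≤ n := (mem_Icc.1 (hsub (max'_mem s hne))).2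
  have := card_le_card hunion
  rw [card_union_of_disjoint hdisj, card_image_of_injOn hinj, card_range] at this
  omega

theorem high_multiplicity_sumfree_general (n r : ℕ) (hr : 4 ≤ r)
    (A : Fin r → Finset ℕ)
    (hsf : ∀ i, ∀ x ∈ A i, ∀ y ∈ A i, x + y ∉ A i) :
    (∀ x ∈ (Finset.Icc 1 n).filter
        (fun z => r - 1 ≤ (Finset.univ.filter (fun i : Fin r => z ∈ A i)).card),
      ∀ y ∈ (Finset.Icc 1 n).filter
        (fun z => r - 1 ≤ (Finset.univ.filter (fun i : Fin r => z ∈ A i)).card),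
        x + y ∉ (Finset.Icc 1 n).filter
          (fun z => r - 1 ≤ (Finset.univ.filter (fun i : Fin r => z ∈ A i)).card)) ∧
    ((Finset.Icc 1 n).filter
        (fun z => r - 1 ≤ (Finset.univ.filter (fun i : Fin r => z ∈ A i)).card)).card
      ≤ (n + 1) / 2 := by
  have hD : IsSumFree ((Icc 1 n).filter fun z => r - 1 ≤ #{i | z ∈ A i}) :=
    IsSumFree.filter_le_card_mem hsf (by rw [Fintype.card_fin]; omega) _
  exact ⟨hD, hD.card_le_of_subset_Icc (filter_subset _ _)⟩

/-- For `r ≥ 4` and sum-free sets `A₁,...,A_r ⊆ {1,...,n}`, the set of elements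
lying in at least `r − 1` of the sets is sum-free, and hence has at most `⌈n/2⌉`
elements. -/
theorem high_multiplicity_sumfree (n r : ℕ) (hn : 1 ≤ n) (hr : 4 ≤ r)
    (A : Fin r → Finset ℕ) (hsub : ∀ i, A i ⊆ Finset.Icc 1 n)
    (hsf : ∀ i, ∀ x ∈ A i, ∀ y ∈ A i, x + y ∉ A i) :
    (∀ x ∈ (Finset.Icc 1 n).filter
        (fun z => r - 1 ≤ (Finset.univ.filter (fun i : Fin r => z ∈ A i)).card),
      ∀ y ∈ (Finset.Icc 1 n).filter
        (fun z => r - 1 ≤ (Finset.univ.filter (fun i : Fin r => z ∈ A i)).card),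
        x + y ∉ (Finset.Icc 1 n).filter
          (fun z => r - 1 ≤ (Finset.univ.filter (fun i : Fin r => z ∈ A i)).card)) ∧
    ((Finset.Icc 1 n).filter
        (fun z => r - 1 ≤ (Finset.univ.filter (fun i : Fin r => z ∈ A i)).card)).card
      ≤ (n + 1) / 2 :=
  high_multiplicity_sumfree_general n r hr A hsf
end

section
/- Let n, r, k be positive integers with k ≤ r, let a ∈ ℝ with a ≥ 0, and let A₁,...,A_k ⊆ {1,...,n} be sum-free sets each satisfying |A_i| ≤ min(A_i), and suppose Σ_{i=1}^k (⌈n/2⌉ − |A_i|) ≤ an. Then |A₁ ∩ ⋯ ∩ A_k| ≥ ⌈n/2⌉ − (k−1) − kan. -/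
/-!
Let `m` be the largest of the minima of the `A i`, attained at `A j`, and let `I = [m, n]`.
Since `A i ⊆ [min A i, n]` and `|A i| ≤ min A i`, the interval `I` contains at most
`n + 1 - 2 |A i| ≤ 1 + 2 (⌈n/2⌉ - |A i|)` points outside `A i`, while `A j ⊆ I`.
So `|I| - |I \ A j| ≥ |A j|`, and a union bound over the sets `I \ A i`, `i ≠ j`, loses at most
`1 + 2 (⌈n/2⌉ - |A i|)` per index; each deficiency `⌈n/2⌉ - |A i|` is itself at most `an`.
-/

open Finset

theorem card_le_card_filter_forall_add_sum_card_sdiff {ι α : Type*} [Fintype ι] [DecidableEq α]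
    (s : Finset α) (A : ι → Finset α) [DecidablePred fun z => ∀ i, z ∈ A i] :
    #s ≤ #(s.filter fun z => ∀ i, z ∈ A i) + ∑ i, #(s \ A i) := by
  have hcover : s.filter (fun z => ¬ ∀ i, z ∈ A i) ⊆ univ.biUnion fun i => s \ A i := by
    intro z hz
    obtain ⟨hzs, hzA⟩ := mem_filter.1 hz
    obtain ⟨i, hi⟩ := not_forall.1 hzA
    exact mem_biUnion.2 ⟨i, mem_univ i, mem_sdiff.2 ⟨hzs, hi⟩⟩
  calc #s = #(s.filter fun z => ∀ i, z ∈ A i) + #(s.filter fun z => ¬ ∀ i, z ∈ A i) :=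
        (card_filter_add_card_filter_not _).symm
    _ ≤ #(s.filter fun z => ∀ i, z ∈ A i) + ∑ i, #(s \ A i) := by
        gcongr
        exact (card_le_card hcover).trans card_biUnion_le

theorem card_Icc_sdiff_add_card_le {A : Finset ℕ} (hA : A.Nonempty) {m n : ℕ}
    (hAn : ∀ x ∈ A, x ≤ n) (hm : A.min' hA ≤ m) :
    #(Icc m n \ A) + #A ≤ n + 1 - A.min' hA := by
  have hA' : A ⊆ Icc (A.min' hA) n := fun x hx => mem_Icc.2 ⟨min'_le A x hx, hAn x hx⟩
  have hunion : Icc m n ∪ A ⊆ Icc (A.min' hA) n := union_subset (Icc_subset_Icc_left hm) hA'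
  simpa only [card_sdiff_add_card, Nat.card_Icc] using card_le_card hunion

/-- Read `e i, s i, c, N, T` as `|I \ A i|, |A i|, ⌈n/2⌉, |I|, |⋂ A i|`. -/
theorem sub_sub_mul_le_of_union_bound {ι : Type*} [Fintype ι] (j : ι) {N T c : ℕ} {b : ℝ}
    (e s : ι → ℕ) (hcount : N ≤ T + ∑ i, e i) (hj : e j + s j ≤ N)
    (he : ∀ i, e i + 2 * s i ≤ 2 * c + 1) (hdef : ∑ i, ((c : ℝ) - s i) ≤ b) :
    (c : ℝ) - (Fintype.card ι - 1 : ℝ) - Fintype.card ι * b ≤ T := by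
  classical
  have hd : ∀ i, (0 : ℝ) ≤ c - s i := fun i => by
    have : s i ≤ c := by have := he i; omega
    simpa only [sub_nonneg] using (Nat.cast_le.2 this : (s i : ℝ) ≤ c)
  have hdb : ∀ i, (c : ℝ) - s i ≤ b := fun i =>
    (single_le_sum (fun i _ => hd i) (mem_univ i)).trans hdef
  have he' : ∀ i, (e i : ℝ) ≤ 1 + b + (c - s i) := fun i => by
    have : (e i : ℝ) + 2 * s i ≤ 2 * c + 1 := by exact_mod_cast he i
    linarith [hdb i]
  have hrest : ∑ i ∈ univ.erase j, (e i : ℝ) ≤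
      (Fintype.card ι - 1) * (1 + b) + ∑ i ∈ univ.erase j, ((c : ℝ) - s i) :=
    calc ∑ i ∈ univ.erase j, (e i : ℝ) ≤ ∑ i ∈ univ.erase j, (1 + b + ((c : ℝ) - s i)) :=
          sum_le_sum fun i _ => he' i
      _ = _ := by
          rw [sum_add_distrib, sum_const, card_erase_of_mem (mem_univ j), card_univ,
            nsmul_eq_mul, Nat.cast_pred (Fintype.card_pos_iff.2 ⟨j⟩)]
  have hcount' : (N : ℝ) ≤ T + (e j + ∑ i ∈ univ.erase j, (e i : ℝ)) := by
    rw [add_sum_erase univ (fun i => (e i : ℝ)) (mem_univ j)]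
    exact_mod_cast hcount
  have hj' : (e j : ℝ) + s j ≤ N := by exact_mod_cast hj
  rw [← add_sum_erase _ _ (mem_univ j)] at hdef
  linarith

theorem intersection_of_type_c_general (n k : ℕ) (hk : 1 ≤ k)
    (a : ℝ) (A : Fin k → Finset ℕ)
    (hsub : ∀ i, A i ⊆ Finset.Icc 1 n)
    (hne : ∀ i, (A i).Nonempty)
    (hmin : ∀ i, ∀ x ∈ A i, (A i).card ≤ x)
    (hdef : ∑ i : Fin k, ((((n + 1) / 2 : ℕ) : ℝ) - ((A i).card : ℝ)) ≤ a * n) :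
    (((n + 1) / 2 : ℕ) : ℝ) - (k - 1 : ℝ) - k * a * n ≤
      ((((Finset.Icc 1 n).filter (fun z => ∀ i, z ∈ A i)).card : ℕ) : ℝ) := by
  have : Nonempty (Fin k) := ⟨⟨0, hk⟩⟩
  obtain ⟨j, hj⟩ := Finite.exists_max fun i => (A i).min' (hne i)
  set I := Icc ((A j).min' (hne j)) n
  have hAn : ∀ i, ∀ x ∈ A i, x ≤ n := fun i x hx => (mem_Icc.1 (hsub i hx)).2
  have hI : I ⊆ Icc 1 n := Icc_subset_Icc_left (mem_Icc.1 (hsub j (min'_mem _ _))).1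
  have hcount := (card_le_card_filter_forall_add_sum_card_sdiff I A).trans
    (Nat.add_le_add_right (card_le_card (filter_subset_filter _ hI)) _)
  have hbound := sub_sub_mul_le_of_union_bound j (fun i => #(I \ A i)) (fun i => #(A i))
    hcount ?_ ?_ hdef
  · rw [Fintype.card_fin] at hbound
    linarith
  · simpa only [I, Nat.card_Icc] using card_Icc_sdiff_add_card_le (hne j) (hAn j) le_rfl
  · intro i
    have hIi : #(I \ A i) + #(A i) ≤ n + 1 - (A i).min' (hne i) :=
      card_Icc_sdiff_add_card_le (hne i) (hAn i) (hj i)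
    have hci := hmin i _ (min'_mem _ (hne i))
    omega

/-- If `A₁,...,A_k ⊆ {1,...,n}` are sum-free sets of type (c) (each satisfies
`|A_i| ≤ min(A_i)`) whose total deficiency from `⌈n/2⌉` is at most `an`, then
`|A₁ ∩ ⋯ ∩ A_k| ≥ ⌈n/2⌉ − (k−1) − kan`. -/
theorem intersection_of_type_c (n r k : ℕ) (hn : 1 ≤ n) (hk : 1 ≤ k) (hkr : k ≤ r)
    (a : ℝ) (ha : 0 ≤ a) (A : Fin k → Finset ℕ)
    (hsub : ∀ i, A i ⊆ Finset.Icc 1 n)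
    (hne : ∀ i, (A i).Nonempty)
    (hsf : ∀ i, ∀ x ∈ A i, ∀ y ∈ A i, x + y ∉ A i)
    (hmin : ∀ i, ∀ x ∈ A i, (A i).card ≤ x)
    (hdef : ∑ i : Fin k, ((((n + 1) / 2 : ℕ) : ℝ) - ((A i).card : ℝ)) ≤ a * n) :
    (((n + 1) / 2 : ℕ) : ℝ) - (k - 1 : ℝ) - k * a * n ≤
      ((((Finset.Icc 1 n).filter (fun z => ∀ i, z ∈ A i)).card : ℕ) : ℝ) :=
  intersection_of_type_c_general n k hk a A hsub hne hmin hdef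
end

section
/- Let n ≥ 2 be an integer and suppose A ⊆ {1,...,n} satisfies: |A ∩ {1,...,⌊n/2⌋}| = k with A ∩ {1,...,⌊n/2⌋} = {δ₁,...,δ_k}, every δᵢ satisfies 2δᵢ ≤ n and 2δᵢ ∈ {⌊n/2⌋+1,...,n}, and {⌊n/2⌋+1,...,n} \ A ⊆ {2δ₁,...,2δ_k}. Then the number of 2-colourings of A with no monochromatic Schur triple is at most 2^⌈n/2⌉. -/
/-!
A valid colouring must give `2d` the colour opposite to `d` (the triple `d + d = 2d`), so with
`D = A ∩ [1, ⌊n/2⌋]` it is determined by its restriction to `S = A \ 2D`. Since `2D` is a copy of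
`D` inside the upper half `U = [⌊n/2⌋ + 1, n]` and `A ⊆ D ∪ U`, we get `|S| ≤ |D| + |U \ 2D| = |U|`.
-/

open Finset

section SchurFree

variable {M : Type*} [Add M] [DecidableEq M]

def schurFreeColourings (A : Finset M) : Finset (A → Fin 2) :=
  univ.filter fun σ => ∀ x y z : A, σ x = σ y → σ y = σ z → (x : M) + y ≠ z

variable {A S : Finset M}

theorem apply_ne_of_mem_schurFreeColourings {σ : A → Fin 2} (hσ : σ ∈ schurFreeColourings A) {x z : A}
    (hxz : (x : M) + x = z) : σ z ≠ σ x := fun h =>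
  (mem_filter.mp hσ).2 x x z rfl h.symm hxz

theorem eq_of_mem_schurFreeColourings_of_eqOn (hSA : S ⊆ A)
    (hdouble : ∀ a ∈ A, a ∉ S → ∃ d ∈ S, d + d = a)
    {σ τ : A → Fin 2} (hσ : σ ∈ schurFreeColourings A) (hτ : τ ∈ schurFreeColourings A)
    (hστ : ∀ a : A, (a : M) ∈ S → σ a = τ a) : σ = τ := by
  funext a
  by_cases ha : (a : M) ∈ S
  · exact hστ a ha
  obtain ⟨d, hdS, hda⟩ := hdouble a a.2 ha
  have hσd := apply_ne_of_mem_schurFreeColourings hσ (x := ⟨d, hSA hdS⟩) hda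
  have hτd := apply_ne_of_mem_schurFreeColourings hτ (x := ⟨d, hSA hdS⟩) hda
  have hd := hστ ⟨d, hSA hdS⟩ hdS
  -- two colours both different from a third one in `Fin 2` coincide
  omega

theorem card_schurFreeColourings_le (hSA : S ⊆ A)
    (hdouble : ∀ a ∈ A, a ∉ S → ∃ d ∈ S, d + d = a) :
    #(schurFreeColourings A) ≤ 2 ^ #S :=
  calc #(schurFreeColourings A)
      ≤ #(univ : Finset (S → Fin 2)) :=
        card_le_card_of_injOn (fun σ s => σ ⟨s, hSA s.2⟩) (fun _ _ => mem_univ _)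
          fun _ hσ _ hτ hστ => eq_of_mem_schurFreeColourings_of_eqOn hSA hdouble hσ hτ
            fun a ha => congrFun hστ ⟨a, ha⟩
    _ = 2 ^ #S := by simp

end SchurFree

theorem card_sdiff_image_le_of_subset_union {α : Type*} [DecidableEq α] {A D U : Finset α}
    {f : α → α} (hA : A ⊆ D ∪ U) (hf : Set.InjOn f D) (hfD : D.image f ⊆ U) :
    #(A \ D.image f) ≤ #U :=
  calc #(A \ D.image f)
      ≤ #(D ∪ U \ D.image f) := card_le_card fun a ha => by
        have := hA (mem_sdiff.mp ha).1
        grind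
    _ ≤ #D + #(U \ D.image f) := card_union_le _ _
    _ = #U := by rw [← card_image_of_injOn hf, add_comm, card_sdiff_add_card_eq_card hfD]

theorem colourings_near_I2_bound_general (n : ℕ) (A : Finset ℕ)
    (hA : A ⊆ Finset.Icc 1 n)
    (hdouble : ∀ d ∈ A ∩ Finset.Icc 1 (n / 2), 2 * d ∈ Finset.Icc (n / 2 + 1) n) :
    (Finset.univ.filter (fun σ : A → Fin 2 =>
      ∀ x y z : A, σ x = σ y → σ y = σ z → (x : ℕ) + (y : ℕ) ≠ (z : ℕ))).card
      ≤ 2 ^ ((n + 1) / 2) := by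
  set D := A ∩ Icc 1 (n / 2)
  have hDA : D ⊆ A := inter_subset_left
  have hsplit : A ⊆ D ∪ Icc (n / 2 + 1) n := fun a ha => by
    have := mem_Icc.mp (hA ha)
    by_cases a ≤ n / 2 <;> simp [D, ha] <;> omega
  have hdoubled : ∀ a ∈ A, a ∉ A \ D.image (2 * ·) → ∃ d ∈ A \ D.image (2 * ·), d + d = a := by
    intro a ha haS
    obtain ⟨d, hd, rfl⟩ := mem_image.mp (by simpa [ha] using haS)
    refine ⟨d, mem_sdiff.mpr ⟨hDA hd, fun hd' => ?_⟩, by ring⟩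
    obtain ⟨e, he, hed⟩ := mem_image.mp hd'
    have := mem_Icc.mp (hdouble e he)
    have := (mem_Icc.mp (mem_inter.mp hd).2).2
    omega
  calc _ ≤ 2 ^ #(A \ D.image (2 * ·)) := card_schurFreeColourings_le sdiff_subset hdoubled
    _ ≤ 2 ^ #(Icc (n / 2 + 1) n) := Nat.pow_le_pow_right two_pos <|
        card_sdiff_image_le_of_subset_union hsplit (fun _ _ _ _ h => by simpa using h)
          fun _ h => by obtain ⟨d, hd, rfl⟩ := mem_image.mp h; exact hdouble d hd
    _ = 2 ^ ((n + 1) / 2) := by rw [Nat.card_Icc]; congr 1; omega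

/-- Suppose `A ⊆ {1,...,n}` has `A ∩ {1,...,⌊n/2⌋} = {δ₁,...,δ_k}` with each
`2δᵢ ∈ {⌊n/2⌋+1,...,n}`, and every element of `{⌊n/2⌋+1,...,n}` missing from
`A` is one of the `2δᵢ`. Then the number of 2-colourings of `A` with no
monochromatic Schur triple is at most `2^⌈n/2⌉`. -/
theorem colourings_near_I2_bound (n : ℕ) (hn : 2 ≤ n) (A : Finset ℕ)
    (hA : A ⊆ Finset.Icc 1 n) (k : ℕ)
    (hk : (A ∩ Finset.Icc 1 (n / 2)).card = k)
    (hdouble : ∀ d ∈ A ∩ Finset.Icc 1 (n / 2), 2 * d ∈ Finset.Icc (n / 2 + 1) n)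
    (hmiss : Finset.Icc (n / 2 + 1) n \ A ⊆
      (A ∩ Finset.Icc 1 (n / 2)).image (fun d => 2 * d)) :
    (Finset.univ.filter (fun σ : A → Fin 2 =>
      ∀ x y z : A, σ x = σ y → σ y = σ z → (x : ℕ) + (y : ℕ) ≠ (z : ℕ))).card
      ≤ 2 ^ ((n + 1) / 2) :=
  colourings_near_I2_bound_general n A hA hdouble
end
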